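/- Let {E_k : k = 1,...,n} be positive semidefinite operators on ℂ^d, each of rank at most one, such that the map sending each density matrix ρ (positive semidefinite with trace 1, pure or mixed) to (tr(ρ E_1),...,tr(ρ E_n)) is injective on the set of all density matrices. Suppose there is a subset B ⊆ {1,...,n} with ∑_{k∈B} E_k = I. Let G = ∑_{k=1}^n E_k and F_k = G^{-1/2} E_k G^{-1/2}. Then {F_k} is a rank-1 POVM and the map ρ ↦ (tr(ρ F_1),...,tr(ρ F_n)) is injective on the set of all density matrices; that is, {F_k} is informationally complete with respect to all quantum states. -/

import Mathlib

/-!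
Since `∑ k ∈ B, E k = 1`, the frame operator `G = ∑ k, E k` dominates `1` and is invertible, so
conjugation by `S = G^{-1/2}` turns `{E_k}` into the rank-one POVM `{F_k = S E_k S}`. Statistics
transform as `tr(ρ F_k) = tr((S ρ S) E_k)`, and summing over `B` recovers `tr(S ρ S)`. Hence two
states with equal `F`-statistics become, once `S ρ S` is normalised to a state, states with equal
`E`-statistics; informational completeness of `{E_k}` and invertibility of `S` identify them.
-/

open Matrix BigOperators ComplexOrder

/-- `ρ` is a density matrix: positive semidefinite with trace one. -/
def IsDensityMatrix {d : ℕ} (ρ : Matrix (Fin d) (Fin d) ℂ) : Prop :=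
  ρ.PosSemidef ∧ ρ.trace = 1

/-- The positive semidefinite square root of a positive semidefinite matrix
(Mathlib's former `Matrix.PosSemidef.sqrt`, removed since). -/
noncomputable def Matrix.PosSemidef.sqrt {n : Type*} [Fintype n] [DecidableEq n] {𝕜 : Type*}
    [RCLike 𝕜] {A : Matrix n n 𝕜} (hA : A.PosSemidef) : Matrix n n 𝕜 :=
  (hA.1.eigenvectorUnitary : Matrix n n 𝕜) * diagonal ((↑) ∘ (√·) ∘ hA.1.eigenvalues) *
    (star hA.1.eigenvectorUnitary : Matrix n n 𝕜)

namespace Matrix.PosSemidef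

variable {n : Type*} [Fintype n] [DecidableEq n] {𝕜 : Type*} [RCLike 𝕜] {A : Matrix n n 𝕜}

lemma posSemidef_sqrt (hA : A.PosSemidef) : hA.sqrt.PosSemidef := by
  have h := PosSemidef.mul_mul_conjTranspose_same
    (A := diagonal ((↑) ∘ (√·) ∘ hA.1.eigenvalues : n → 𝕜)) ?_
    (hA.1.eigenvectorUnitary : Matrix n n 𝕜)
  · simpa [Matrix.PosSemidef.sqrt, Matrix.star_eq_conjTranspose] using h
  refine posSemidef_diagonal_iff.mpr fun i ↦ ?_
  rw [Function.comp_apply, RCLike.nonneg_iff, RCLike.ofReal_re, RCLike.ofReal_im]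
  exact ⟨Real.sqrt_nonneg _, rfl⟩

lemma sqrt_mul_self (hA : A.PosSemidef) : hA.sqrt * hA.sqrt = A := by
  let C : Matrix n n 𝕜 := hA.1.eigenvectorUnitary
  let D := diagonal ((↑) ∘ Real.sqrt ∘ hA.1.eigenvalues : n → 𝕜)
  suffices C * (D * (star C * C) * D) * star C = A by
    change (C * D * star C) * (C * D * star C) = A
    simpa only [← Matrix.mul_assoc] using this
  have hC : star C * C = 1 := by simp [C]
  have hD : D * D = diagonal ((↑) ∘ hA.1.eigenvalues) := by
    rw [diagonal_mul_diagonal]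
    congr! with v
    simp [← pow_two, ← RCLike.ofReal_pow, Real.sq_sqrt (hA.eigenvalues_nonneg v)]
  rw [hC, Matrix.mul_one, hD]
  conv_rhs => rw [hA.1.spectral_theorem, Unitary.conjStarAlgAut_apply]

lemma isUnit_sqrt (hA : A.PosSemidef) (hA' : A.PosDef) : IsUnit hA.sqrt :=
  isUnit_of_mul_isUnit_left (hA.sqrt_mul_self ▸ hA'.isUnit)

lemma inv_sqrt_mul_mul_inv_sqrt (hA : A.PosSemidef) (hA' : A.PosDef) :
    hA.sqrt⁻¹ * A * hA.sqrt⁻¹ = 1 := by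
  have hdet := (isUnit_iff_isUnit_det _).mp (hA.isUnit_sqrt hA')
  calc hA.sqrt⁻¹ * A * hA.sqrt⁻¹ = hA.sqrt⁻¹ * (hA.sqrt * hA.sqrt) * hA.sqrt⁻¹ := by
        rw [hA.sqrt_mul_self]
    _ = 1 := by
        rw [← Matrix.mul_assoc, nonsing_inv_mul _ hdet, Matrix.one_mul, mul_nonsing_inv _ hdet]

end Matrix.PosSemidef

lemma Matrix.posDef_sum_of_sum_eq_one {ι m 𝕜 : Type*} [Fintype ι] [Fintype m] [DecidableEq m]
    [RCLike 𝕜] {E : ι → Matrix m m 𝕜} (hpsd : ∀ k, (E k).PosSemidef) {B : Finset ι}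
    (hB : ∑ k ∈ B, E k = 1) : (∑ k, E k).PosDef := by
  classical
  rw [← Finset.sum_add_sum_compl B, hB]
  exact PosDef.one.add_posSemidef (posSemidef_sum _ fun k _ ↦ hpsd k)

lemma IsDensityMatrix.ne_zero {d : ℕ} {ρ : Matrix (Fin d) (Fin d) ℂ} (hρ : IsDensityMatrix ρ) :
    ρ ≠ 0 := by
  rintro rfl
  simpa using hρ.2

lemma isDensityMatrix_inv_trace_smul {d : ℕ} {M : Matrix (Fin d) (Fin d) ℂ} (hM : M.PosSemidef)
    (h : M.trace ≠ 0) : IsDensityMatrix (M.trace⁻¹ • M) :=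
  ⟨hM.smul (inv_nonneg_of_nonneg hM.trace_nonneg), by
    rw [trace_smul, smul_eq_mul, inv_mul_cancel₀ h]⟩

def IsInformationallyComplete {d : ℕ} {ι : Type*} (E : ι → Matrix (Fin d) (Fin d) ℂ) : Prop :=
  ∀ ρ₁ ρ₂ : Matrix (Fin d) (Fin d) ℂ, IsDensityMatrix ρ₁ → IsDensityMatrix ρ₂ →
    (∀ k, (ρ₁ * E k).trace = (ρ₂ * E k).trace) → ρ₁ = ρ₂

lemma IsInformationallyComplete.conjTranspose_mul_mul_same {d : ℕ} {ι : Type*}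
    {E : ι → Matrix (Fin d) (Fin d) ℂ} (hE : IsInformationallyComplete E) {B : Finset ι}
    (hB : ∑ k ∈ B, E k = 1) {T : Matrix (Fin d) (Fin d) ℂ} (hT : IsUnit T) :
    IsInformationallyComplete fun k ↦ Tᴴ * E k * T := by
  intro ρ₁ ρ₂ h₁ h₂ hstat
  have hconj_inj : Function.Injective fun ρ : Matrix (Fin d) (Fin d) ℂ ↦ T * ρ * Tᴴ :=
    fun ρ ρ' h ↦ hT.mul_left_cancel (hT.star.mul_right_cancel h)
  have htrace_conj : ∀ ρ k, (T * ρ * Tᴴ * E k).trace = (ρ * (Tᴴ * E k * T)).trace := fun ρ k ↦ by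
    rw [Matrix.mul_assoc, Matrix.mul_assoc, trace_mul_comm T]
    simp only [Matrix.mul_assoc]
  set M₁ := T * ρ₁ * Tᴴ
  set M₂ := T * ρ₂ * Tᴴ
  have hM₁ : M₁.PosSemidef := h₁.1.mul_mul_conjTranspose_same T
  have hM₂ : M₂.PosSemidef := h₂.1.mul_mul_conjTranspose_same T
  have hstat' : ∀ k, (M₁ * E k).trace = (M₂ * E k).trace := fun k ↦ by
    rw [htrace_conj, htrace_conj, hstat]
  have htrace : M₁.trace = M₂.trace := by
    rw [← Matrix.mul_one M₁, ← Matrix.mul_one M₂, ← hB, Matrix.mul_sum, Matrix.mul_sum,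
      trace_sum, trace_sum]
    exact Finset.sum_congr rfl fun k _ ↦ hstat' k
  have hc : M₁.trace ≠ 0 := fun h ↦
    h₁.ne_zero (hconj_inj (by simpa using hM₁.trace_eq_zero_iff.mp h))
  have hnorm := hE _ _ (isDensityMatrix_inv_trace_smul hM₁ hc)
    (isDensityMatrix_inv_trace_smul hM₂ (htrace ▸ hc)) fun k ↦ by
      rw [smul_mul, smul_mul, trace_smul, trace_smul, hstat', htrace]
  rw [htrace] at hnorm
  exact hconj_inj (smul_right_injective _ (inv_ne_zero (htrace ▸ hc)) hnorm)

theorem stmt_1 {d n : ℕ} (E : Fin n → Matrix (Fin d) (Fin d) ℂ)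
    (hpsd : ∀ k, (E k).PosSemidef) (hrank : ∀ k, (E k).rank ≤ 1)
    (hinj : ∀ ρ₁ ρ₂ : Matrix (Fin d) (Fin d) ℂ, IsDensityMatrix ρ₁ → IsDensityMatrix ρ₂ →
      (∀ k, (ρ₁ * E k).trace = (ρ₂ * E k).trace) → ρ₁ = ρ₂)
    (B : Finset (Fin n)) (hB : ∑ k ∈ B, E k = 1) :
    ∀ hG : (∑ k, E k).PosSemidef,
      (∀ k, (hG.sqrt⁻¹ * E k * hG.sqrt⁻¹).PosSemidef) ∧
      (∀ k, (hG.sqrt⁻¹ * E k * hG.sqrt⁻¹).rank ≤ 1) ∧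
      (∑ k, hG.sqrt⁻¹ * E k * hG.sqrt⁻¹ = 1) ∧
      (∀ ρ₁ ρ₂ : Matrix (Fin d) (Fin d) ℂ, IsDensityMatrix ρ₁ → IsDensityMatrix ρ₂ →
        (∀ k, (ρ₁ * (hG.sqrt⁻¹ * E k * hG.sqrt⁻¹)).trace =
              (ρ₂ * (hG.sqrt⁻¹ * E k * hG.sqrt⁻¹)).trace) → ρ₁ = ρ₂) := by
  intro hG
  set S := hG.sqrt⁻¹
  have hGpd := posDef_sum_of_sum_eq_one hpsd hB
  have hS : Sᴴ = S := hG.posSemidef_sqrt.inv.1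
  refine ⟨fun k ↦ ?_, fun k ↦ ?_, ?_, ?_⟩
  · have := (hpsd k).conjTranspose_mul_mul_same S
    rwa [hS] at this
  · exact (rank_mul_le_left _ _).trans ((rank_mul_le_right _ _).trans (hrank k))
  · rw [← Finset.sum_mul, ← Finset.mul_sum]
    exact hG.inv_sqrt_mul_mul_inv_sqrt hGpd
  · have hF := IsInformationallyComplete.conjTranspose_mul_mul_same hinj hB
      (isUnit_nonsing_inv_iff.mpr (hG.isUnit_sqrt hGpd))
    rwa [hS] at hF
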